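/- Let M = (E,ρ) be a finite matroid of rank d ≥ 2, let 0 ≤ i ≤ d−2, and let e ∈ E be a link or a coloop with b := ρ(E) − ρ(E∖e) ∈ {0,1}. Then W_i^M(p) = (1+p) · W_{i−b}^{M∖e}(p) + W_i^{M/e}(p). -/

import Mathlib

open Finset

/-- A matroid on a finite ground set, presented by its (Whitney) rank function:
normalized, monotone, and submodular. -/
structure FinMatroid (α : Type*) [DecidableEq α] [Fintype α] where
  rk : Finset α → ℕ
  rk_le_card : ∀ S, rk S ≤ S.card
  rk_mono : ∀ ⦃S T : Finset α⦄, S ⊆ T → rk S ≤ rk T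
  rk_submod : ∀ S T : Finset α, rk (S ∪ T) + rk (S ∩ T) ≤ rk S + rk T

namespace FinMatroid

variable {α : Type*} [DecidableEq α] [Fintype α]

/-- The rank `ρ(E)` of the matroid. -/
def rank (M : FinMatroid α) : ℕ := M.rk Finset.univ

lemma rk_empty (M : FinMatroid α) : M.rk ∅ = 0 :=
  Nat.le_zero.mp (by simpa using M.rk_le_card ∅)

lemma rk_le_rank (M : FinMatroid α) (S : Finset α) : M.rk S ≤ M.rank :=
  M.rk_mono (Finset.subset_univ S)

/-- A loop is an element of rank zero. -/
def IsLoop (M : FinMatroid α) (e : α) : Prop := M.rk {e} = 0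

/-- A coloop: deleting it lowers the rank. -/
def IsColoop (M : FinMatroid α) (e : α) : Prop :=
  M.rk (Finset.univ.erase e) + 1 = M.rank

/-- A link is an element which is neither a loop nor a coloop. -/
def IsLink (M : FinMatroid α) (e : α) : Prop := ¬ M.IsLoop e ∧ ¬ M.IsColoop e

/-- The embedding of the ground set with `e` removed. -/
def emb (e : α) : {x : α // x ≠ e} ↪ α := Function.Embedding.subtype _

lemma e_not_mem_map (e : α) (S : Finset {x : α // x ≠ e}) : e ∉ S.map (emb e) := by
  simp [emb]

/-- Deletion `M ∖ e` of an element. -/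
def delete (M : FinMatroid α) (e : α) : FinMatroid {x : α // x ≠ e} where
  rk S := M.rk (S.map (emb e))
  rk_le_card S := by simpa using M.rk_le_card (S.map (emb e))
  rk_mono S T h := M.rk_mono (Finset.map_subset_map.mpr h)
  rk_submod S T := by
    have := M.rk_submod (S.map (emb e)) (T.map (emb e))
    rwa [← Finset.map_union, ← Finset.map_inter] at this

/-- Contraction `M / e` of an element. -/
def contract (M : FinMatroid α) (e : α) : FinMatroid {x : α // x ≠ e} where
  rk S := M.rk (insert e (S.map (emb e))) - M.rk {e}
  rk_le_card S := by
    try dsimp only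
    have h1 : M.rk (insert e (S.map (emb e))) ≤ M.rk (S.map (emb e)) + M.rk {e} := by
      have := M.rk_submod (S.map (emb e)) {e}
      have hie : S.map (emb e) ∩ {e} = ∅ := by
        simp [Finset.eq_empty_iff_forall_notMem, emb]
      rw [Finset.union_comm] at this
      rw [Finset.insert_eq]
      rw [hie, M.rk_empty] at this
      omega
    have h2 := M.rk_le_card (S.map (emb e))
    simp only [Finset.card_map] at h2
    omega
  rk_mono S T h := by
    try dsimp only
    have := M.rk_mono (Finset.insert_subset_insert e ((Finset.map_subset_map (f := emb e)).mpr h))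
    omega
  rk_submod S T := by
    try dsimp only
    have key := M.rk_submod (insert e (S.map (emb e))) (insert e (T.map (emb e)))
    have hU : insert e (S.map (emb e)) ∪ insert e (T.map (emb e))
        = insert e ((S ∪ T).map (emb e)) := by
      rw [Finset.map_union]; ext x
      simp only [Finset.mem_union, Finset.mem_insert]; tauto
    have hI : insert e (S.map (emb e)) ∩ insert e (T.map (emb e))
        = insert e ((S ∩ T).map (emb e)) := by
      rw [Finset.map_inter]; ext x
      simp only [Finset.mem_inter, Finset.mem_insert]; tauto
    rw [hU, hI] at key
    have l1 : M.rk {e} ≤ M.rk (insert e ((S ∪ T).map (emb e))) :=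
      M.rk_mono (by simp)
    have l2 : M.rk {e} ≤ M.rk (insert e ((S ∩ T).map (emb e))) :=
      M.rk_mono (by simp)
    have l3 : M.rk {e} ≤ M.rk (insert e (S.map (emb e))) := M.rk_mono (by simp)
    have l4 : M.rk {e} ≤ M.rk (insert e (T.map (emb e))) := M.rk_mono (by simp)
    omega

/-- The Tutte polynomial
`T_M(x,y) = Σ_{S ⊆ E} (x-1)^{ρ(E)-ρ(S)} (y-1)^{#S-ρ(S)}`, evaluated in a
commutative ring. -/
def tutte (M : FinMatroid α) {R : Type*} [CommRing R] (x y : R) : R :=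
  ∑ S : Finset α, (x - 1) ^ (M.rank - M.rk S) * (y - 1) ^ (S.card - M.rk S)

/-- The specialization `Y_M(q,t) = (1-q)^{ρ(E)} q^{σ(E)} T_M((qt+1-q)/(1-q), 1/q)`. -/
noncomputable def Y (M : FinMatroid α) {K : Type*} [Field K] (q t : K) : K :=
  (1 - q) ^ M.rank * q ^ (Fintype.card α - M.rank) *
    M.tutte ((q * t + 1 - q) / (1 - q)) (1 / q)

open Classical in
/-- The Möbius function `μ(0̂, S)` of the poset obtained from the finsets satisfying `P`
(ordered by inclusion) by adjoining a bottom element `0̂`; by convention `μ(0̂,S) = 0`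
for sets not satisfying `P`. -/
noncomputable def mob (P : Finset α → Prop) : Finset α → ℤ := fun S =>
  if P S then -1 - ∑ T ∈ (S.powerset.erase S).attach, mob P T.1 else 0
termination_by S => S.card
decreasing_by
  have hT := T.2
  simp only [Finset.mem_erase, Finset.mem_powerset] at hT
  exact Finset.card_lt_card (HasSubset.Subset.ssubset_of_ne hT.2 hT.1)

/-- Membership in `𝒮ᵢ^M = {S ⊆ E : ρ(S) ≥ d - i}` (with `i : ℤ`). -/
def Smem (M : FinMatroid α) (i : ℤ) (S : Finset α) : Prop :=
  (M.rank : ℤ) - i ≤ (M.rk S : ℤ)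

/-- The Möbius function `μᵢ^M(S) = μ(0̂, S)` of the lattice `ℒᵢ^M = {0̂} ⊕ 𝒮ᵢ^M`. -/
noncomputable def mu (M : FinMatroid α) (i : ℤ) : Finset α → ℤ := mob (M.Smem i)

/-- `W_i^M(p) = Σ_{S ∈ 𝒮ᵢ^M} μᵢ^M(S) (-p)^{#S-d+1+i}`, evaluated in a commutative
ring.  (Terms with `S ∉ 𝒮ᵢ^M` vanish since `μᵢ^M` is zero there.) -/
noncomputable def W (M : FinMatroid α) (i : ℤ) {R : Type*} [CommRing R] (p : R) : R :=
  ∑ S : Finset α, (M.mu i S : R) * (-p) ^ (((S.card : ℤ) - M.rank + 1 + i).toNat)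

end FinMatroid


namespace FinMatroid

variable {α : Type*} [DecidableEq α] [Fintype α]

lemma powerset_eq_filter' {S T : Finset α} (h : T ⊆ S) :
    T.powerset = S.powerset.filter (· ⊆ T) := by
  ext U
  simp only [mem_powerset, mem_filter]
  exact ⟨fun hU => ⟨hU.trans h, hU⟩, fun hU => hU.2⟩

lemma alt_sum_interval {R : Type*} [CommRing R] (S U : Finset α) (hU : U ⊆ S) :
    ∑ T ∈ S.powerset.filter (U ⊆ ·), (-1 : R) ^ (T.card - U.card)
      = if U = S then 1 else 0 := by
  have key : ∑ T ∈ S.powerset.filter (U ⊆ ·), (-1 : R) ^ (T.card - U.card)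
      = ∑ V ∈ (S \ U).powerset, (-1 : R) ^ V.card := by
    refine Finset.sum_nbij' (fun T => T \ U) (fun V => V ∪ U) ?_ ?_ ?_ ?_ ?_
    · intro T hT
      simp only [mem_filter, mem_powerset] at hT
      simp only [mem_powerset]
      exact sdiff_subset_sdiff hT.1 Subset.rfl
    · intro V hV
      simp only [mem_powerset] at hV
      simp only [mem_filter, mem_powerset]
      constructor
      · exact union_subset (hV.trans (sdiff_subset)) hU
      · exact subset_union_right
    · intro T hT
      simp only [mem_filter, mem_powerset] at hT
      exact sdiff_union_of_subset hT.2
    · intro V hV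
      simp only [mem_powerset] at hV
      show (V ∪ U) \ U = V
      rw [union_sdiff_right]
      rw [Finset.sdiff_eq_self_iff_disjoint]
      exact Finset.disjoint_left.mpr fun x hx => (mem_sdiff.mp (hV hx)).2
    · intro T hT
      simp only [mem_filter, mem_powerset] at hT
      congr 1
      exact (card_sdiff_of_subset hT.2).symm
  rw [key]
  have hz := @Finset.sum_powerset_neg_one_pow_card α _ (S \ U)
  have cast : ∑ V ∈ (S \ U).powerset, (-1 : R) ^ V.card
      = ((∑ V ∈ (S \ U).powerset, (-1 : ℤ) ^ V.card : ℤ) : R) := by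
    push_cast; rfl
  rw [cast, hz]
  by_cases h : U = S
  · simp [h]
  · have : S \ U ≠ ∅ := by
      intro hc
      exact h (Finset.Subset.antisymm hU (by rwa [sdiff_eq_empty_iff_subset] at hc))
    simp [this, h]

/-- Möbius inversion on the boolean lattice. -/
lemma boolean_inversion {R : Type*} [CommRing R] (f : Finset α → R) (S : Finset α) :
    ∑ T ∈ S.powerset, ∑ U ∈ T.powerset, (-1 : R) ^ (T.card - U.card) * f U = f S := by
  have step1 : ∀ T ∈ S.powerset, ∑ U ∈ T.powerset, (-1 : R) ^ (T.card - U.card) * f U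
      = ∑ U ∈ S.powerset, if U ⊆ T then (-1 : R) ^ (T.card - U.card) * f U else 0 := by
    intro T hT
    rw [powerset_eq_filter' (mem_powerset.mp hT), sum_filter]
  rw [Finset.sum_congr rfl step1, Finset.sum_comm]
  have step2 : ∀ U ∈ S.powerset,
      ∑ T ∈ S.powerset, (if U ⊆ T then (-1 : R) ^ (T.card - U.card) * f U else 0)
      = (if U = S then 1 else 0) * f U := by
    intro U hU
    rw [← sum_filter, ← sum_mul, alt_sum_interval S U (mem_powerset.mp hU)]
  rw [Finset.sum_congr rfl step2]
  simp only [ite_mul, one_mul, zero_mul]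
  rw [Finset.sum_ite_eq' S.powerset S f]
  simp

/-- Closed formula for `mob` of an upward-closed predicate. -/
lemma mob_eq_sum (P : Finset α → Prop) [DecidablePred P] (hP : ∀ ⦃T S : Finset α⦄, T ⊆ S → P T → P S)
    (S : Finset α) :
    mob P S = -∑ T ∈ S.powerset, (-1 : ℤ) ^ (S.card - T.card) * (if P T then 1 else 0) := by
  induction S using Finset.strongInduction with
  | _ S ih =>
    rw [mob]
    by_cases hS : P S
    · rw [if_pos hS]
      have hattach : ∑ T ∈ (S.powerset.erase S).attach, mob P T.1
          = ∑ T ∈ S.powerset.erase S, mob P T := Finset.sum_attach _ _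
      rw [hattach]
      have hrec : ∀ T ∈ S.powerset.erase S, mob P T
          = -∑ U ∈ T.powerset, (-1:ℤ)^(T.card - U.card) * (if P U then 1 else 0) := by
        intro T hT
        simp only [mem_erase, mem_powerset] at hT
        exact ih T (HasSubset.Subset.ssubset_of_ne hT.2 hT.1)
      rw [Finset.sum_congr rfl hrec]
      have hinv := boolean_inversion (fun U => (if P U then (1:ℤ) else 0)) S
      simp only [if_pos hS] at hinv
      rw [← Finset.add_sum_erase S.powerset _ (mem_powerset_self S)] at hinv
      simp only [Finset.sum_neg_distrib]
      linarith
    · rw [if_neg hS]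
      have hz : ∀ T ∈ S.powerset, ((-1:ℤ)^(S.card - T.card) * (if P T then 1 else 0)) = 0 := by
        intro T hT
        rw [if_neg (fun h => hS (hP (mem_powerset.mp hT) h)), mul_zero]
      rw [Finset.sum_congr rfl hz]
      simp

instance (M : FinMatroid α) (i : ℤ) : DecidablePred (M.Smem i) := fun S =>
  inferInstanceAs (Decidable ((M.rank : ℤ) - i ≤ (M.rk S : ℤ)))

lemma sum_pow_card {R : Type*} [CommRing R] (U : Finset α) (p : R) :
    ∑ V ∈ U.powerset, p ^ V.card = (1 + p) ^ U.card := by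
  have h := Finset.prod_add (fun _ : α => p) (fun _ : α => (1:R)) U
  simp only [Finset.prod_const, one_pow, mul_one] at h
  rw [← h, add_comm]

/-- Closed formula for `W`. -/
lemma W_eq (M : FinMatroid α) (i : ℤ) {R : Type*} [CommRing R] (p : R) :
    M.W i p = -∑ T : Finset α, (if M.Smem i T then
      (-p) ^ (((T.card : ℤ) - (M.rank : ℤ) + 1 + i).toNat)
        * (1 + p) ^ (Fintype.card α - T.card)
      else 0) := by
  have hup : ∀ ⦃T S : Finset α⦄, T ⊆ S → M.Smem i T → M.Smem i S := fun T S hTS h =>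
    le_trans h (by exact_mod_cast M.rk_mono hTS)
  have key : ∀ S : Finset α, (M.mu i S : R) * (-p) ^ (((S.card:ℤ) - (M.rank:ℤ) + 1 + i).toNat)
      = ∑ T : Finset α, (if T ⊆ S then
          -((-1:R)^(S.card - T.card) * (if M.Smem i T then 1 else 0)
            * (-p) ^ (((S.card:ℤ) - (M.rank:ℤ) + 1 + i).toNat)) else 0) := by
    intro S
    rw [← Finset.sum_filter]
    have hps : Finset.univ.filter (fun T => T ⊆ S) = S.powerset := by
      ext T; simp [Finset.mem_powerset]
    rw [hps, mu, mob_eq_sum _ hup]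
    push_cast
    rw [Finset.sum_neg_distrib, ← Finset.sum_mul, neg_mul]
  rw [W, Finset.sum_congr rfl fun S _ => key S, Finset.sum_comm]
  rw [← Finset.sum_neg_distrib]
  refine Finset.sum_congr rfl fun T _ => ?_
  by_cases hT : M.Smem i T
  · have hTc : (M.rank : ℤ) - i ≤ (T.card : ℤ) :=
      le_trans hT (by exact_mod_cast M.rk_le_card T)
    simp only [if_pos hT]
    rw [← Finset.sum_filter]
    have step : ∑ S ∈ Finset.univ.filter (fun S => T ⊆ S),
        -((-1:R)^(S.card - T.card) * 1
          * (-p)^(((S.card:ℤ) - (M.rank:ℤ) + 1 + i).toNat))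
        = ∑ V ∈ (Finset.univ \ T).powerset,
          -((-p)^(((T.card:ℤ) - (M.rank:ℤ) + 1 + i).toNat) * p ^ V.card) := by
      refine Finset.sum_nbij' (fun S => S \ T) (fun V => V ∪ T) ?_ ?_ ?_ ?_ ?_
      · intro S hS
        simp only [mem_powerset]
        exact sdiff_subset_sdiff (subset_univ S) Subset.rfl
      · intro V hV
        simp only [mem_filter, mem_univ, true_and]
        exact subset_union_right
      · intro S hS
        simp only [mem_filter, mem_univ, true_and] at hS
        exact sdiff_union_of_subset hS
      · intro V hV
        simp only [mem_powerset] at hV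
        show (V ∪ T) \ T = V
        rw [union_sdiff_right, Finset.sdiff_eq_self_iff_disjoint]
        exact Finset.disjoint_left.mpr fun x hx => (mem_sdiff.mp (hV hx)).2
      · intro S hS
        simp only [mem_filter, mem_univ, true_and] at hS
        have hcard : T.card ≤ S.card := card_le_card hS
        have hsd : (S \ T).card = S.card - T.card := card_sdiff_of_subset hS
        have hexp : ((S.card:ℤ) - (M.rank:ℤ) + 1 + i).toNat
            = ((T.card:ℤ) - (M.rank:ℤ) + 1 + i).toNat + (S \ T).card := by
          omega
        rw [hexp, pow_add, ← hsd]
        have hpk : (-1:R)^((S \ T).card) * (-p)^((S \ T).card) = p^((S \ T).card) := by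
          rw [← mul_pow]
          norm_num
        calc -((-1:R)^((S \ T).card) * 1
              * ((-p)^(((T.card:ℤ) - (M.rank:ℤ) + 1 + i).toNat) * (-p)^((S \ T).card)))
            = -((-p)^(((T.card:ℤ) - (M.rank:ℤ) + 1 + i).toNat)
              * ((-1:R)^((S \ T).card) * (-p)^((S \ T).card))) := by ring
          _ = _ := by rw [hpk]
    rw [step, Finset.sum_neg_distrib, ← Finset.mul_sum, sum_pow_card]
    have : (Finset.univ \ T).card = Fintype.card α - T.card := by
      rw [card_sdiff_of_subset (subset_univ T), card_univ]
    rw [this]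
  · rw [if_neg hT]
    simp [hT]

end FinMatroid

open FinMatroid in
/-- deletion–contraction for the polynomials `W_i`:
`W_i^M(p) = (1+p) W_{i-b}^{M∖e}(p) + W_i^{M/e}(p)` where `b = ρ(E) - ρ(E∖e)`. -/
theorem W_deletion_contraction {α : Type*} [DecidableEq α] [Fintype α]
    (M : FinMatroid α) (hd : 2 ≤ M.rank) (i : ℤ) (hi0 : 0 ≤ i)
    (hi : i ≤ (M.rank : ℤ) - 2) (e : α) (he : M.IsLink e ∨ M.IsColoop e)
    {R : Type*} [CommRing R] (p : R) :
    M.W i p =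
      (1 + p) * (M.delete e).W (i - ((M.rank : ℤ) - (M.rk (Finset.univ.erase e) : ℤ))) p +
        (M.contract e).W i p := by
  classical
  set d := M.rank with hdd
  set bZ : ℤ := (M.rank : ℤ) - (M.rk (Finset.univ.erase e) : ℤ) with hbZ
  have he_univ : e ∈ (Finset.univ : Finset α) := mem_univ e
  have herase : insert e (Finset.univ.erase e) = Finset.univ := insert_erase he_univ
  have hsub : M.rank ≤ M.rk (Finset.univ.erase e) + M.rk {e} := by
    have h := M.rk_submod (Finset.univ.erase e) {e}
    have hu : (Finset.univ.erase e) ∪ {e} = Finset.univ := by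
      rw [union_comm, ← insert_eq]
      exact herase
    have hii : (Finset.univ.erase e) ∩ {e} = ∅ := by
      ext x
      simp only [mem_inter, mem_erase, mem_singleton, notMem_empty, iff_false]
      rintro ⟨⟨hx, -⟩, rfl⟩
      exact hx rfl
    rw [hu, hii, M.rk_empty] at h
    simpa [rank] using h
  have hrke_le : M.rk {e} ≤ 1 := by simpa using M.rk_le_card {e}
  have hrke : M.rk {e} = 1 := by
    rcases he with ⟨hnl, hnc⟩ | hc
    · have h0 : M.rk {e} ≠ 0 := hnl
      omega
    · have hc' : M.rk (Finset.univ.erase e) + 1 = M.rank := hc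
      omega
  have herank : M.rk (Finset.univ.erase e) ≤ M.rank := M.rk_le_rank _
  -- ground set transfer facts
  have hmapuniv : (Finset.univ : Finset {x : α // x ≠ e}).map (emb e)
      = Finset.univ.erase e := by
    ext x
    simp only [mem_map, mem_univ, true_and, mem_erase, and_true, emb,
      Function.Embedding.coe_subtype]
    constructor
    · rintro ⟨a, rfl⟩
      exact a.2
    · intro hx
      exact ⟨⟨x, hx⟩, rfl⟩
  have hcard_sub : Fintype.card {x : α // x ≠ e} = Fintype.card α - 1 := by
    rw [← Finset.card_univ, ← Finset.card_map (emb e), hmapuniv,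
      Finset.card_erase_of_mem he_univ, Finset.card_univ]
  have hrank_del : ((M.delete e).rank : ℤ) = (d : ℤ) - bZ := by
    have : (M.delete e).rank = M.rk (Finset.univ.erase e) := by
      show M.rk ((Finset.univ : Finset {x : α // x ≠ e}).map (emb e)) = _
      rw [hmapuniv]
    rw [this, hbZ]
    ring
  have hrk_del : ∀ T : Finset {x : α // x ≠ e},
      (M.delete e).rk T = M.rk (T.map (emb e)) := fun T => rfl
  have hrk_ins : ∀ T : Finset {x : α // x ≠ e},
      1 ≤ M.rk (insert e (T.map (emb e))) := by
    intro T
    calc 1 = M.rk {e} := hrke.symm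
      _ ≤ _ := M.rk_mono (by simp)
  have hrk_con : ∀ T : Finset {x : α // x ≠ e},
      ((M.contract e).rk T : ℤ) = (M.rk (insert e (T.map (emb e))) : ℤ) - 1 := by
    intro T
    have h1 := hrk_ins T
    show ((M.rk (insert e (T.map (emb e))) - M.rk {e} : ℕ) : ℤ) = _
    rw [hrke]
    omega
  have hrank_con : ((M.contract e).rank : ℤ) = (d : ℤ) - 1 := by
    have h1 : (M.contract e).rank
        = M.rk (insert e ((Finset.univ : Finset {x : α // x ≠ e}).map (emb e))) - M.rk {e} :=
      rfl
    rw [h1, hmapuniv, herase, hrke]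
    have : 1 ≤ M.rk Finset.univ := by
      calc 1 = M.rk {e} := hrke.symm
        _ ≤ _ := M.rk_mono (subset_univ _)
    have hduniv : d = M.rk Finset.univ := hdd
    show ((M.rk Finset.univ - 1 : ℕ) : ℤ) = _
    omega
  rw [W_eq, W_eq, W_eq]
  rw [← Finset.sum_filter_add_sum_filter_not Finset.univ (fun S => e ∈ S)
    (fun S => if M.Smem i S then
      (-p) ^ (((S.card : ℤ) - (M.rank : ℤ) + 1 + i).toNat)
        * (1 + p) ^ (Fintype.card α - S.card) else 0)]
  have hdel : ∑ S ∈ Finset.univ.filter (fun S => ¬ e ∈ S),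
      (if M.Smem i S then
        (-p) ^ (((S.card : ℤ) - (M.rank : ℤ) + 1 + i).toNat)
          * (1 + p) ^ (Fintype.card α - S.card) else 0)
      = (1 + p) * ∑ T : Finset {x : α // x ≠ e},
        (if (M.delete e).Smem (i - bZ) T then
          (-p) ^ ((((T.card : ℤ)) - ((M.delete e).rank : ℤ) + 1 + (i - bZ)).toNat)
            * (1 + p) ^ (Fintype.card {x : α // x ≠ e} - T.card) else 0) := by
    rw [Finset.mul_sum]
    have hleftinv : ∀ S : Finset α, e ∉ S →
        ((S.subtype (fun x => x ≠ e)).map (emb e)) = S := by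
      intro S hS
      show (S.subtype (fun x => x ≠ e)).map (Function.Embedding.subtype _) = S
      rw [Finset.subtype_map]
      rw [Finset.filter_ne']
      exact erase_eq_of_notMem hS
    refine Finset.sum_nbij' (fun S => S.subtype (fun x => x ≠ e))
      (fun T => T.map (emb e)) ?_ ?_ ?_ ?_ ?_
    · intro S _
      exact mem_univ _
    · intro T _
      simp only [mem_filter, mem_univ, true_and]
      exact e_not_mem_map e T
    · intro S hS
      simp only [mem_filter, mem_univ, true_and] at hS
      exact hleftinv S hS
    · intro T _
      ext a
      simp only [Finset.mem_subtype, mem_map, emb, Function.Embedding.coe_subtype]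
      constructor
      · rintro ⟨b, hb, hba⟩
        exact (Subtype.ext hba) ▸ hb
      · intro ha
        exact ⟨a, ha, rfl⟩
    · intro S hS
      simp only [mem_filter, mem_univ, true_and] at hS
      have hmap : ((S.subtype (fun x => x ≠ e)).map (emb e)) = S := hleftinv S hS
      set T := S.subtype (fun x => x ≠ e) with hTdef
      have hcardT : S.card = T.card := by
        rw [← hmap, Finset.card_map]
      have hcond : M.Smem i S ↔ (M.delete e).Smem (i - bZ) T := by
        unfold FinMatroid.Smem
        rw [hrk_del, hmap, hrank_del]
        constructor <;> intro h <;> linarith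
      by_cases hc : M.Smem i S
      · rw [if_pos hc, if_pos (hcond.mp hc)]
        have hcastT : (T.card : ℤ) = (S.card : ℤ) := by exact_mod_cast hcardT.symm
        have hexp : (((T.card : ℤ)) - ((M.delete e).rank : ℤ) + 1 + (i - bZ)).toNat
            = (((S.card : ℤ)) - ((d : ℕ) : ℤ) + 1 + i).toNat := by
          rw [hrank_del]
          congr 1
          linarith
        rw [hexp]
        have hn : 1 ≤ Fintype.card α := Fintype.card_pos_iff.mpr ⟨e⟩
        have hTle : T.card ≤ Fintype.card α - 1 := by
          have := Finset.card_le_univ T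
          omega
        have hpow : Fintype.card α - S.card
            = (Fintype.card {x : α // x ≠ e} - T.card) + 1 := by
          rw [hcard_sub, hcardT]
          omega
        rw [hpow, pow_succ]
        ring
      · rw [if_neg hc, if_neg (fun h => hc (hcond.mpr h)), mul_zero]
  have hcon : ∑ S ∈ Finset.univ.filter (fun S => e ∈ S),
      (if M.Smem i S then
        (-p) ^ (((S.card : ℤ) - (M.rank : ℤ) + 1 + i).toNat)
          * (1 + p) ^ (Fintype.card α - S.card) else 0)
      = ∑ T : Finset {x : α // x ≠ e},
        (if (M.contract e).Smem i T then
          (-p) ^ ((((T.card : ℤ)) - ((M.contract e).rank : ℤ) + 1 + i).toNat)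
            * (1 + p) ^ (Fintype.card {x : α // x ≠ e} - T.card) else 0) := by
    have hleftinv : ∀ S : Finset α, e ∈ S →
        insert e (((S.erase e).subtype (fun x => x ≠ e)).map (emb e)) = S := by
      intro S hS
      have h1 : ((S.erase e).subtype (fun x => x ≠ e)).map (emb e) = S.erase e := by
        show ((S.erase e).subtype (fun x => x ≠ e)).map (Function.Embedding.subtype _)
          = S.erase e
        rw [Finset.subtype_map]
        exact Finset.filter_true_of_mem fun x hx => (mem_erase.mp hx).1
      rw [h1]
      exact insert_erase hS
    refine Finset.sum_nbij' (fun S => (S.erase e).subtype (fun x => x ≠ e))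
      (fun T => insert e (T.map (emb e))) ?_ ?_ ?_ ?_ ?_
    · intro S _
      exact mem_univ _
    · intro T _
      simp only [mem_filter, mem_univ, true_and]
      exact mem_insert_self e _
    · intro S hS
      simp only [mem_filter, mem_univ, true_and] at hS
      exact hleftinv S hS
    · intro T _
      have h1 : (insert e (T.map (emb e))).erase e = T.map (emb e) :=
        Finset.erase_insert (e_not_mem_map e T)
      rw [h1]
      ext a
      simp only [Finset.mem_subtype, mem_map, emb, Function.Embedding.coe_subtype]
      constructor
      · rintro ⟨b, hb, hba⟩
        exact (Subtype.ext hba) ▸ hb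
      · intro ha
        exact ⟨a, ha, rfl⟩
    · intro S hS
      simp only [mem_filter, mem_univ, true_and] at hS
      have hmap : insert e (((S.erase e).subtype (fun x => x ≠ e)).map (emb e)) = S :=
        hleftinv S hS
      set T := (S.erase e).subtype (fun x => x ≠ e) with hTdef
      have hScard : S.card = T.card + 1 := by
        rw [← hmap, Finset.card_insert_of_notMem (e_not_mem_map e T), Finset.card_map]
      have hcond : M.Smem i S ↔ (M.contract e).Smem i T := by
        unfold FinMatroid.Smem
        rw [hrk_con T, hmap, hrank_con]
        constructor <;> intro h <;> linarith
      by_cases hc : M.Smem i S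
      · rw [if_pos hc, if_pos (hcond.mp hc)]
        have hcastS : (S.card : ℤ) = (T.card : ℤ) + 1 := by exact_mod_cast hScard
        have hexp : (((T.card : ℤ)) - ((M.contract e).rank : ℤ) + 1 + i).toNat
            = (((S.card : ℤ)) - ((d : ℕ) : ℤ) + 1 + i).toNat := by
          rw [hrank_con]
          congr 1
          linarith
        rw [hexp]
        have hpow : Fintype.card α - S.card = Fintype.card {x : α // x ≠ e} - T.card := by
          rw [hcard_sub]
          omega
        rw [hpow]
      · rw [if_neg hc, if_neg (fun h => hc (hcond.mpr h))]
  rw [hdel, hcon]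
  ring
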